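/- arXiv:2209.13776 — 3 statements merged into one kernel-verified Lean document; each statement's English description precedes it below -/
import Mathlib

section
/- Let G be the join K_1 ∨ (P_{ℓ₁} ∪ ⋯ ∪ P_{ℓ_r}) with center vertex u, let λ be an eigenvalue of the adjacency matrix A(G) with |λ| ≥ 2, and let α be an eigenvector for λ normalized so that α(u) = 1. Then for any path component P_ℓ of G − u with adjacency matrix A_ℓ, the restriction x of α to the vertices of P_ℓ satisfies x = Σ_{k=0}^∞ λ^{-(k+1)} A_ℓ^k 𝟏. -/
open SimpleGraph Matrix

/-- Disjoint union of paths `P_{L 0}, …, P_{L (r-1)}`. -/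
def pathsUnion (r : ℕ) (L : Fin r → ℕ) : SimpleGraph (Σ i, Fin (L i)) where
  Adj x y := x.1 = y.1 ∧ ((x.2 : ℕ) + 1 = (y.2 : ℕ) ∨ (y.2 : ℕ) + 1 = (x.2 : ℕ))
  symm := ⟨by rintro x y ⟨h1, h2⟩; exact ⟨h1.symm, h2.symm⟩⟩
  loopless := ⟨by rintro x ⟨-, h | h⟩ <;> omega⟩

/-- Join of a graph with one new vertex (`K₁ ∨ F`), center `none`. -/
def cone {V : Type*} (F : SimpleGraph V) : SimpleGraph (Option V) where
  Adj x y := match x, y with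
    | none, none => False
    | none, some _ => True
    | some _, none => True
    | some a, some b => F.Adj a b
  symm := ⟨by rintro (_ | a) (_ | b) h <;> simp_all <;> exact h.symm⟩
  loopless := ⟨by rintro (_ | a) h <;> simp_all⟩

/-- Join of two graphs. -/
def gJoin {α β : Type*} (G : SimpleGraph α) (H : SimpleGraph β) : SimpleGraph (α ⊕ β) where
  Adj x y := match x, y with
    | .inl a, .inl b => G.Adj a b
    | .inr a, .inr b => H.Adj a b
    | _, _ => True
  symm := ⟨by rintro (a | a) (b | b) h <;> simp_all <;> exact h.symm⟩
  loopless := ⟨by rintro (a | a) h <;> simp_all⟩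

/-- Cycle graph on `m` vertices. -/
def cycleG (m : ℕ) : SimpleGraph (Fin m) where
  Adj x y := x ≠ y ∧ (((x : ℕ) + 1) % m = (y : ℕ) ∨ ((y : ℕ) + 1) % m = (x : ℕ))
  symm := ⟨by rintro x y ⟨h1, h2⟩; exact ⟨h1.symm, h2.symm⟩⟩
  loopless := ⟨by rintro x ⟨h, -⟩; exact h rfl⟩

/-- Real adjacency matrix of a graph. -/
noncomputable def adjMat {V : Type*} (G : SimpleGraph V) : Matrix V V ℝ :=
  letI := Classical.decRel G.Adj
  G.adjMatrix ℝ

/-- Largest adjacency eigenvalue. -/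
noncomputable def maxEig {V : Type*} [Fintype V] [DecidableEq V] (G : SimpleGraph V) : ℝ :=
  sSup (spectrum ℝ (adjMat G))

/-- Smallest adjacency eigenvalue. -/
noncomputable def minEig {V : Type*} [Fintype V] [DecidableEq V] (G : SimpleGraph V) : ℝ :=
  sInf (spectrum ℝ (adjMat G))

/-- Spread of a graph. -/
noncomputable def gspread {V : Type*} [Fintype V] [DecidableEq V] (G : SimpleGraph V) : ℝ :=
  maxEig G - minEig G

/-- Adjacency matrix of the path on `m` vertices. -/
def pathMatrix (m : ℕ) : Matrix (Fin m) (Fin m) ℝ :=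
  Matrix.of fun a b => if (a : ℕ) + 1 = (b : ℕ) ∨ (b : ℕ) + 1 = (a : ℕ) then 1 else 0

/-- `H` is a minor of `G`. -/
def HasMinor {V W : Type*} (G : SimpleGraph V) (H : SimpleGraph W) : Prop :=
  ∃ B : W → Set V, (∀ w, (B w).Nonempty) ∧ (Pairwise fun a b => Disjoint (B a) (B b)) ∧
    (∀ w, (G.induce (B w)).Connected) ∧
    (∀ ⦃a b⦄, H.Adj a b → ∃ u ∈ B a, ∃ v ∈ B b, G.Adj u v)

/-- Planarity via Wagner's theorem: no `K₅` and no `K_{3,3}` minor. -/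
def IsPlanar {V : Type*} (G : SimpleGraph V) : Prop :=
  ¬ HasMinor G (⊤ : SimpleGraph (Fin 5)) ∧
  ¬ HasMinor G (completeBipartiteGraph (Fin 3) (Fin 3))

/-- Outerplanarity: no `K₄` and no `K_{2,3}` minor. -/
def IsOuterplanar {V : Type*} (G : SimpleGraph V) : Prop :=
  ¬ HasMinor G (⊤ : SimpleGraph (Fin 4)) ∧
  ¬ HasMinor G (completeBipartiteGraph (Fin 2) (Fin 3))

/-!
Reading the eigenvalue equation at a vertex of the path component gives `λ x = A_ℓ x + 𝟏`, the
centre contributing `α(u) = 1`. Every eigenvalue `μ` of the path satisfies `|μ| < 2`: at the first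
coordinate where an eigenvector is maximal in absolute value, `M` say, the left neighbour is
strictly smaller and the right one is not larger, so `|μ| M < 2 M`. Hence, after diagonalizing the
symmetric matrix `A_ℓ`, the Neumann series `∑ λ^{-(k+1)} A_ℓ^k` converges to `(λ - A_ℓ)⁻¹` as a
family of geometric series, and `x = (λ - A_ℓ)⁻¹ 𝟏`.
-/

section CardLeOne

variable {ι α : Type*} [AddCommGroup α] [LinearOrder α] [IsOrderedAddMonoid α] {s : Finset ι}
  {f : ι → α} {M : α}

theorem abs_sum_le_of_card_le_one (hs : s.card ≤ 1) (hM : 0 ≤ M) (hf : ∀ i ∈ s, |f i| ≤ M) :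
    |∑ i ∈ s, f i| ≤ M := by
  rcases Nat.le_one_iff_eq_zero_or_eq_one.1 hs with hs | hs
  · simpa [Finset.card_eq_zero.1 hs] using hM
  · obtain ⟨a, rfl⟩ := Finset.card_eq_one.1 hs
    simpa using hf a

theorem abs_sum_lt_of_card_le_one (hs : s.card ≤ 1) (hM : 0 < M) (hf : ∀ i ∈ s, |f i| < M) :
    |∑ i ∈ s, f i| < M := by
  rcases Nat.le_one_iff_eq_zero_or_eq_one.1 hs with hs | hs
  · simpa [Finset.card_eq_zero.1 hs] using hM
  · obtain ⟨a, rfl⟩ := Finset.card_eq_one.1 hs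
    simpa using hf a

end CardLeOne

theorem hasSum_inv_pow_succ_mul_pow {μ c : ℝ} (h : |μ| < |c|) :
    HasSum (fun k : ℕ => (c ^ (k + 1))⁻¹ * μ ^ k) (c - μ)⁻¹ := by
  have hc : c ≠ 0 := by rintro rfl; simpa using (abs_nonneg _).trans_lt h
  have hq : |μ / c| < 1 := by rwa [abs_div, div_lt_one (abs_pos.2 hc)]
  have hgeom := (hasSum_geometric_of_abs_lt_one hq).mul_left c⁻¹
  rwa [show c⁻¹ * (1 - μ / c)⁻¹ = (c - μ)⁻¹ by field_simp,
    show (fun k => c⁻¹ * (μ / c) ^ k) = fun k => (c ^ (k + 1))⁻¹ * μ ^ k by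
      ext k; rw [div_eq_mul_inv, mul_pow, pow_succ, mul_inv, inv_pow]; ring] at hgeom

namespace Matrix.IsHermitian

variable {n : Type*} [Fintype n] [DecidableEq n] {A : Matrix n n ℝ} (hA : A.IsHermitian) {c : ℝ}
include hA

theorem isUnit_scalar_sub (hc : ∀ i, hA.eigenvalues i ≠ c) : IsUnit (scalar n c - A) := by
  rw [isUnit_iff_isUnit_det, ← eval_charpoly, hA.charpoly_eq, Polynomial.eval_prod,
    isUnit_iff_ne_zero, Finset.prod_ne_zero_iff]
  intro i _
  simpa [sub_eq_zero] using (hc i).symm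

theorem hasSum_inv_pow_succ_smul_pow (hc : ∀ i, |hA.eigenvalues i| < |c|) :
    HasSum (fun k : ℕ => (c ^ (k + 1))⁻¹ • A ^ k) (scalar n c - A)⁻¹ := by
  set μ := hA.eigenvalues
  set φ := Unitary.conjStarAlgAut ℝ (Matrix n n ℝ) hA.eigenvectorUnitary
  have hAφ : A = φ (diagonal μ) := by
    simpa only [RCLike.ofReal_real_eq_id, Function.id_comp] using hA.spectral_theorem
  have hne : ∀ i, c - μ i ≠ 0 := fun i => sub_ne_zero.2 fun h => (hc i).ne (by rw [h])
  have hdiag : HasSum (fun k : ℕ => diagonal fun i => (c ^ (k + 1))⁻¹ * μ i ^ k)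
      (diagonal fun i => (c - μ i)⁻¹) :=
    HasSum.matrix_diagonal (Pi.hasSum.2 fun i => hasSum_inv_pow_succ_mul_pow (hc i))
  have hφ : Continuous φ := φ.toAlgEquiv.toLinearEquiv.toLinearMap.continuous_of_finiteDimensional
  convert hdiag.map φ hφ using 1
  · ext1 k
    simp [hAφ, ← map_pow, diagonal_pow, ← map_smul, ← diagonal_smul]
  · apply inv_eq_left_inv
    have : scalar n c - A = φ (diagonal fun i => c - μ i) := by
      rw [← diagonal_sub, map_sub, ← hAφ, ← smul_one_eq_diagonal, map_smul, map_one, scalar_apply,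
        smul_one_eq_diagonal]
    rw [this]
    simp [← map_mul, diagonal_mul_diagonal, hne]

theorem hasSum_inv_pow_succ_smul_pow_mulVec (hc : ∀ i, |hA.eigenvalues i| < |c|) {x b : n → ℝ}
    (hx : c • x = A *ᵥ x + b) : HasSum (fun k : ℕ => (c ^ (k + 1))⁻¹ • (A ^ k *ᵥ b)) x := by
  have hb : b = (scalar n c - A) *ᵥ x := by
    rw [sub_mulVec, scalar_apply, ← smul_one_eq_diagonal, smul_mulVec, one_mulVec, hx]
    abel
  have hunit := hA.isUnit_scalar_sub fun i h => (hc i).ne (by rw [h])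
  have := (hA.hasSum_inv_pow_succ_smul_pow hc).map (mulVec.addMonoidHomLeft b)
    (continuous_id.matrix_mulVec continuous_const)
  convert this using 1
  · ext1 k
    exact (smul_mulVec _ _ _).symm
  · change x = (scalar n c - A)⁻¹ *ᵥ b
    rw [hb, mulVec_mulVec, nonsing_inv_mul _ ((isUnit_iff_isUnit_det _).1 hunit), one_mulVec]

end Matrix.IsHermitian

theorem pathMatrix_isHermitian (m : ℕ) : (pathMatrix m).IsHermitian := by
  ext i j
  simp only [pathMatrix, conjTranspose_apply, of_apply, star_trivial]
  exact if_congr or_comm rfl rfl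

theorem pathMatrix_mulVec_apply {m : ℕ} (v : Fin m → ℝ) (j : Fin m) :
    (pathMatrix m *ᵥ v) j =
      (∑ k ∈ {k : Fin m | (j : ℕ) + 1 = k}, v k) + ∑ k ∈ {k : Fin m | (k : ℕ) + 1 = j}, v k := by
  simp only [mulVec, dotProduct, pathMatrix, of_apply, Finset.sum_filter, ← Finset.sum_add_distrib]
  refine Finset.sum_congr rfl fun k _ => ?_
  split_ifs <;> first | (exfalso; omega) | simp

theorem abs_lt_two_of_pathMatrix_mulVec_eq_smul {m : ℕ} {μ : ℝ} {v : Fin m → ℝ} (hv : v ≠ 0)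
    (h : pathMatrix m *ᵥ v = μ • v) : |μ| < 2 := by
  obtain ⟨j₁, hj₁⟩ := Function.ne_iff.1 hv
  have hne : (Finset.univ : Finset (Fin m)).Nonempty := ⟨j₁, Finset.mem_univ _⟩
  set M := Finset.univ.sup' hne fun j => |v j|
  have hle : ∀ j, |v j| ≤ M := fun j => Finset.le_sup' (fun j => |v j|) (Finset.mem_univ j)
  have hM : 0 < M := (abs_pos.2 hj₁).trans_le (hle j₁)
  obtain ⟨j, hjM, hjmin⟩ : ∃ j, |v j| = M ∧ ∀ i < j, |v i| < M := by
    obtain ⟨j₀, -, hj₀⟩ := Finset.exists_mem_eq_sup' hne fun j => |v j|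
    obtain ⟨j, hj, hjmin⟩ := Finset.exists_min_image {j | |v j| = M} id
      ⟨j₀, Finset.mem_filter.2 ⟨Finset.mem_univ _, hj₀.symm⟩⟩
    refine ⟨j, by simpa using hj, fun i hij => (hle i).lt_of_ne fun hi => ?_⟩
    exact (hjmin i (by simpa using hi)).not_gt hij
  have hright : |∑ k ∈ {k : Fin m | (j : ℕ) + 1 = k}, v k| ≤ M :=
    abs_sum_le_of_card_le_one (Finset.card_le_one.2 fun a ha b hb => by
      simp at ha hb; omega) hM.le fun k _ => hle k
  have hleft : |∑ k ∈ {k : Fin m | (k : ℕ) + 1 = j}, v k| < M :=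
    abs_sum_lt_of_card_le_one (Finset.card_le_one.2 fun a ha b hb => by
      simp at ha hb; omega) hM fun k hk => hjmin k (by simp at hk; omega)
  have hrow := congrFun h j
  rw [pathMatrix_mulVec_apply, Pi.smul_apply, smul_eq_mul] at hrow
  have hμM : |μ| * M < 2 * M := by
    rw [← hjM, ← abs_mul, ← hrow]
    exact (abs_add_le _ _).trans_lt (by linarith)
  exact lt_of_mul_lt_mul_right hμM hM.le

theorem adjMat_apply {V : Type*} (G : SimpleGraph V) [DecidableRel G.Adj] (x y : V) :
    adjMat G x y = if G.Adj x y then 1 else 0 := by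
  unfold adjMat
  convert adjMatrix_apply G x y

theorem cone_adjMat_mulVec_some {V : Type*} [Fintype V] (F : SimpleGraph V)
    (α : Option V → ℝ) (v : V) :
    (adjMat (cone F) *ᵥ α) (some v) = α none + (adjMat F *ᵥ (α ∘ some)) v := by
  classical
  simp [mulVec, dotProduct, Fintype.sum_option, adjMat_apply, cone]

theorem pathsUnion_adjMat_mulVec_mk {r : ℕ} {L : Fin r → ℕ} (β : (Σ i, Fin (L i)) → ℝ)
    (i : Fin r) (j : Fin (L i)) :
    (adjMat (pathsUnion r L) *ᵥ β) ⟨i, j⟩ = (pathMatrix (L i) *ᵥ fun k => β ⟨i, k⟩) j := by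
  classical
  simp only [mulVec, dotProduct, ← Finset.univ_sigma_univ, Finset.sum_sigma]
  rw [Finset.sum_eq_single i]
  · simp [adjMat_apply, pathsUnion, pathMatrix]
  · intro i' _ hi'
    simp [adjMat_apply, pathsUnion, Ne.symm hi']
  · simp

theorem stmt_0 (r : ℕ) (L : Fin r → ℕ) (lam : ℝ) (hlam : 2 ≤ |lam|)
    (α : Option (Σ i, Fin (L i)) → ℝ)
    (heig : (adjMat (cone (pathsUnion r L))).mulVec α = lam • α)
    (hu : α none = 1) (i₀ : Fin r) :
    (fun j : Fin (L i₀) => α (some ⟨i₀, j⟩)) =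
      ∑' k : ℕ, (lam ^ (k + 1))⁻¹ • (pathMatrix (L i₀) ^ k).mulVec (fun _ => 1) := by
  have hx : lam • (fun j : Fin (L i₀) => α (some ⟨i₀, j⟩)) =
      pathMatrix (L i₀) *ᵥ (fun j => α (some ⟨i₀, j⟩)) + fun _ => 1 := by
    funext j
    have hrow := congrFun heig (some ⟨i₀, j⟩)
    rw [cone_adjMat_mulVec_some, hu, Function.comp_def, pathsUnion_adjMat_mulVec_mk] at hrow
    simp only [Pi.smul_apply, Pi.add_apply] at hrow ⊢
    linarith
  have hA := pathMatrix_isHermitian (L i₀)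
  refine ((hA.hasSum_inv_pow_succ_smul_pow_mulVec (fun i => ?_) hx).tsum_eq).symm
  have hv : ⇑(hA.eigenvectorBasis i) ≠ 0 :=
    (WithLp.ofLp_eq_zero 2).not.2 <| hA.eigenvectorBasis.orthonormal.ne_zero i
  exact (abs_lt_two_of_pathMatrix_mulVec_eq_smul hv (hA.mulVec_eigenvectorBasis i)).trans_le hlam
end

section
/- Let G = K_1 ∨ (P_{ℓ₁} ∪ ⋯ ∪ P_{ℓ_r}) with center vertex u, and let λ ≥ 2 be an eigenvalue of A(G) with eigenvector α normalized so that α(u) = 1. Then all entries of α are positive. -/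
open SimpleGraph Matrix

/-! If some entry of `α` on the paths were `≤ 0`, look at a minimal one, `m = α x`. The eigen-equation
at `x` reads `λ m = α u + ∑_{y ∼ x} α y ≥ 1 + deg x · m ≥ 1 + 2 m`, since `x` has at most two
neighbours on its path. Hence `(λ - 2) m ≥ 1`, which is impossible for `λ ≥ 2` and `m ≤ 0`. -/

theorem pathsUnion_degree_le_two (r : ℕ) (L : Fin r → ℕ) [DecidableRel (pathsUnion r L).Adj]
    (x : Σ i, Fin (L i)) : (pathsUnion r L).degree x ≤ 2 := by
  rw [← card_neighborFinset_eq_degree]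
  calc (neighborFinset _ x).card ≤ ({(x.2 : ℕ) + 1, (x.2 : ℕ) - 1} : Finset ℕ).card := by
        refine Finset.card_le_card_of_injOn (fun y => (y.2 : ℕ)) ?_ ?_
        · rintro y hy
          obtain ⟨-, h | h⟩ := (mem_neighborFinset _ _ _).1 hy <;>
            simp only [Finset.coe_insert, Finset.coe_singleton, Set.mem_insert_iff,
              Set.mem_singleton_iff] <;> omega
        · rintro ⟨i, a⟩ hy ⟨j, b⟩ hz hab
          obtain ⟨rfl, -⟩ := (mem_neighborFinset _ _ _).1 hy
          obtain ⟨rfl, -⟩ := (mem_neighborFinset _ _ _).1 hz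
          exact congrArg _ (Fin.ext hab)
    _ ≤ 2 := Finset.card_le_two

section Cone

variable {V : Type*} [Fintype V] (F : SimpleGraph V) [DecidableRel F.Adj]

theorem adjMat_cone_mulVec_some (α : Option V → ℝ) (x : V) :
    (adjMat (cone F) *ᵥ α) (some x) = α none + ∑ y ∈ F.neighborFinset x, α (some y) := by
  classical
  simp only [adjMat, mulVec, dotProduct, Fintype.sum_option, adjMatrix_apply, ite_mul, one_mul,
    zero_mul]
  have hcenter : (cone F).Adj (some x) none := trivial
  have hpaths : ∀ y, (cone F).Adj (some x) (some y) ↔ F.Adj x y := fun _ => Iff.rfl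
  simp only [if_pos hcenter, hpaths, ← Finset.sum_filter]
  congr 2
  ext y
  simp

theorem cone_eigenvector_pos (d : ℕ) (hdeg : ∀ x, F.degree x ≤ d) {lam : ℝ} (hlam : d ≤ lam)
    {α : Option V → ℝ} (heig : adjMat (cone F) *ᵥ α = lam • α) (hu : 0 < α none) :
    ∀ v, 0 < α v := by
  rintro (_ | x)
  · exact hu
  obtain ⟨x₀, -, hmin⟩ := Finset.exists_min_image Finset.univ (fun y => α (some y))
    ⟨x, Finset.mem_univ x⟩
  refine lt_of_lt_of_le ?_ (hmin x (Finset.mem_univ x))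
  by_contra! hm
  have hsum : (F.degree x₀ : ℝ) * α (some x₀) ≤ ∑ y ∈ F.neighborFinset x₀, α (some y) := by
    rw [← card_neighborFinset_eq_degree, ← nsmul_eq_mul, ← Finset.sum_const]
    exact Finset.sum_le_sum fun y _ => hmin y (Finset.mem_univ y)
  have hd : (d : ℝ) * α (some x₀) ≤ F.degree x₀ * α (some x₀) :=
    mul_le_mul_of_nonpos_right (by exact_mod_cast hdeg x₀) hm
  have hx₀ := congrFun heig (some x₀)
  rw [adjMat_cone_mulVec_some, Pi.smul_apply, smul_eq_mul] at hx₀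
  nlinarith

end Cone

theorem stmt_1 (r : ℕ) (L : Fin r → ℕ) (lam : ℝ) (hlam : 2 ≤ lam)
    (α : Option (Σ i, Fin (L i)) → ℝ)
    (heig : (adjMat (cone (pathsUnion r L))).mulVec α = lam • α)
    (hu : α none = 1) :
    ∀ v, 0 < α v := by
  classical
  exact cone_eigenvector_pos _ 2 (pathsUnion_degree_le_two r L) (by exact_mod_cast hlam) heig
    (hu ▸ one_pos)
end

section
/- The spread of the double wheel graph (K_1 ∪ K_1) ∨ C_{n−2} equals √(8n−12): its largest eigenvalue is 1 + √(8n−12)/2 and its smallest eigenvalue is 1 − √(8n−12)/2 (for n sufficiently large, e.g. n ≥ 7). -/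
open SimpleGraph Matrix

/-!
By the join formula, an eigenvector of `(K₁ ∪ K₁) ∨ H` with `H` a `k`-regular graph on `m`
vertices either has nonzero coordinate sum on `H`, and then summing the eigenvalue equations
over each side shows that its eigenvalue is a root of `μ (μ - k) = 2 m`, or it has coordinate
sum zero on `H`, and then its eigenvalue is `0` or an eigenvalue of `H`, hence has absolute
value at most `k`. Conversely both roots are eigenvalues, with eigenvectors constant on each
side. For the cycle `k = 2`, and once `m ≥ 4` the roots `1 ± √(2m + 1)` enclose `[-2, 2]`.
-/

open Finset

theorem Matrix.mem_spectrum_iff_exists_mulVec_eq_smul {K V : Type*} [Field K] [Fintype V]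
    [DecidableEq V] {A : Matrix V V K} {μ : K} :
    μ ∈ spectrum K A ↔ ∃ v ≠ 0, A *ᵥ v = μ • v := by
  rw [← Matrix.spectrum_toLin', ← Module.End.hasEigenvalue_iff_mem_spectrum]
  constructor
  · intro h
    obtain ⟨v, hv⟩ := h.exists_hasEigenvector
    exact ⟨v, hv.2, hv.apply_eq_smul⟩
  · rintro ⟨v, hv, h⟩
    exact Module.End.hasEigenvalue_of_hasEigenvector ⟨Module.End.mem_eigenspace_iff.2 h, hv⟩

theorem adjMat_eq_adjMatrix {V : Type*} (G : SimpleGraph V) [DecidableRel G.Adj] :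
    adjMat G = G.adjMatrix ℝ := by
  unfold adjMat
  congr

theorem adjMat_bot {V : Type*} : adjMat (⊥ : SimpleGraph V) = 0 := by
  classical
  ext
  simp [adjMat_eq_adjMatrix]

section Regular

variable {V : Type*} [Fintype V] {G : SimpleGraph V} [DecidableRel G.Adj] {k : ℕ}

theorem SimpleGraph.IsRegularOfDegree.sum_adjMatrix_mulVec (hG : G.IsRegularOfDegree k)
    (x : V → ℝ) : ∑ v, (G.adjMatrix ℝ *ᵥ x) v = k * ∑ v, x v := by
  have h1 : (1 : V → ℝ) ᵥ* G.adjMatrix ℝ = fun _ => (k : ℝ) := by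
    ext u; simp [hG u]
  calc ∑ v, (G.adjMatrix ℝ *ᵥ x) v = 1 ⬝ᵥ (G.adjMatrix ℝ *ᵥ x) := (one_dotProduct _).symm
    _ = k * ∑ v, x v := by rw [dotProduct_mulVec, h1]; simp [dotProduct, mul_sum]

theorem SimpleGraph.IsRegularOfDegree.abs_le_of_mem_spectrum [DecidableEq V]
    (hG : G.IsRegularOfDegree k) {μ : ℝ} (hμ : μ ∈ spectrum ℝ (adjMat G)) : |μ| ≤ k := by
  obtain ⟨x, hx, hμx⟩ := Matrix.mem_spectrum_iff_exists_mulVec_eq_smul.1 hμ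
  rw [adjMat_eq_adjMatrix] at hμx
  obtain ⟨i, hi⟩ := Function.ne_iff.1 hx
  have : Nonempty V := ⟨i⟩
  obtain ⟨j, hj⟩ := Finite.exists_max fun v => |x v|
  have hxj : 0 < |x j| := (abs_pos.2 hi).trans_le (hj i)
  refine le_of_mul_le_mul_right ?_ hxj
  calc |μ| * |x j| = |∑ u ∈ G.neighborFinset j, x u| := by
        rw [← abs_mul, ← smul_eq_mul, ← Pi.smul_apply, ← hμx, adjMatrix_mulVec_apply]
    _ ≤ ∑ u ∈ G.neighborFinset j, |x u| := abs_sum_le_sum_abs _ _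
    _ ≤ ∑ u ∈ G.neighborFinset j, |x j| := sum_le_sum fun u _ => hj u
    _ = k * |x j| := by rw [sum_const, card_neighborFinset_eq_degree, hG j, nsmul_eq_mul]

end Regular

section Join

variable {α β : Type*} [Fintype α] [Fintype β]

theorem adjMat_gJoin_mulVec_inl (G : SimpleGraph α) (H : SimpleGraph β) (v : α ⊕ β → ℝ)
    (i : α) : (adjMat (gJoin G H) *ᵥ v) (.inl i) =
      (adjMat G *ᵥ (v ∘ Sum.inl)) i + ∑ b, v (.inr b) := by
  classical
  simp [adjMat_eq_adjMatrix, mulVec, dotProduct, Fintype.sum_sum_type, adjMatrix_apply, gJoin]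

theorem adjMat_gJoin_mulVec_inr (G : SimpleGraph α) (H : SimpleGraph β) (v : α ⊕ β → ℝ)
    (j : β) : (adjMat (gJoin G H) *ᵥ v) (.inr j) =
      ∑ a, v (.inl a) + (adjMat H *ᵥ (v ∘ Sum.inr)) j := by
  classical
  simp [adjMat_eq_adjMatrix, mulVec, dotProduct, Fintype.sum_sum_type, adjMatrix_apply, gJoin]

end Join

section JoinBot

variable {α β : Type*} [Fintype α] [Fintype β] [DecidableEq α] [DecidableEq β]
  {H : SimpleGraph β} [DecidableRel H.Adj] {k : ℕ}

theorem mem_spectrum_gJoin_bot_of_eq (hH : H.IsRegularOfDegree k) [Nonempty α] [Nonempty β]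
    {μ : ℝ} (hμ : μ * (μ - k) = Fintype.card α * Fintype.card β) :
    μ ∈ spectrum ℝ (adjMat (gJoin (⊥ : SimpleGraph α) H)) := by
  have hα : (Fintype.card α : ℝ) ≠ 0 := by positivity
  refine Matrix.mem_spectrum_iff_exists_mulVec_eq_smul.2
    ⟨Sum.elim (fun _ => (μ - k) / Fintype.card α) (fun _ => 1), ?_, ?_⟩
  · obtain ⟨b⟩ := ‹Nonempty β›
    exact Function.ne_iff.2 ⟨.inr b, by simp⟩
  · ext (i | j)
    · rw [adjMat_gJoin_mulVec_inl, adjMat_bot]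
      simp only [zero_mulVec, Pi.zero_apply, zero_add, Sum.elim_inr, sum_const, card_univ,
        nsmul_eq_mul, mul_one, Pi.smul_apply, Sum.elim_inl, smul_eq_mul]
      rw [mul_div_assoc', hμ]
      field_simp
    · rw [adjMat_gJoin_mulVec_inr, adjMat_eq_adjMatrix, Sum.elim_comp_inr]
      simp only [Sum.elim_inl, Sum.elim_inr, adjMatrix_mulVec_apply, sum_const, card_univ,
        card_neighborFinset_eq_degree, hH j, nsmul_eq_mul, mul_one, Pi.smul_apply, smul_eq_mul]
      field_simp
      ring

theorem eq_or_abs_le_of_mem_spectrum_gJoin_bot (hH : H.IsRegularOfDegree k) {μ : ℝ}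
    (hμ : μ ∈ spectrum ℝ (adjMat (gJoin (⊥ : SimpleGraph α) H))) :
    μ * (μ - k) = Fintype.card α * Fintype.card β ∨ |μ| ≤ k := by
  obtain ⟨v, hv, hμv⟩ := Matrix.mem_spectrum_iff_exists_mulVec_eq_smul.1 hμ
  set a := v ∘ Sum.inl
  set x := v ∘ Sum.inr
  have hinl : ∀ i, ∑ b, x b = μ * a i := fun i => by
    have := congrFun hμv (.inl i)
    rwa [adjMat_gJoin_mulVec_inl, adjMat_bot, zero_mulVec, Pi.zero_apply, zero_add] at this
  have hinr : ∀ j, ∑ i, a i + (H.adjMatrix ℝ *ᵥ x) j = μ * x j := fun j => by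
    have := congrFun hμv (.inr j)
    rwa [adjMat_gJoin_mulVec_inr, adjMat_eq_adjMatrix] at this
  have hsum_inl : Fintype.card α * ∑ b, x b = μ * ∑ i, a i :=
    calc Fintype.card α * ∑ b, x b = ∑ _ : α, ∑ b, x b := by
          rw [sum_const, card_univ, nsmul_eq_mul]
      _ = ∑ i, μ * a i := sum_congr rfl fun i _ => hinl i
      _ = μ * ∑ i, a i := (mul_sum ..).symm
  have hsum_inr : Fintype.card β * ∑ i, a i + k * ∑ b, x b = μ * ∑ b, x b :=
    calc Fintype.card β * ∑ i, a i + k * ∑ b, x b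
        = ∑ j, (∑ i, a i + (H.adjMatrix ℝ *ᵥ x) j) := by
          rw [sum_add_distrib, sum_const, card_univ, nsmul_eq_mul, hH.sum_adjMatrix_mulVec]
      _ = ∑ j, μ * x j := sum_congr rfl fun j _ => hinr j
      _ = μ * ∑ b, x b := (mul_sum ..).symm
  by_cases hx : ∑ b, x b = 0
  · right
    by_cases hμ0 : μ = 0
    · simp [hμ0]
    have ha : a = 0 := funext fun i => by
      simpa [hx, hμ0] using (hinl i).symm
    have hxμ : H.adjMatrix ℝ *ᵥ x = μ • x := funext fun j => by
      simpa [ha] using hinr j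
    have hx0 : x ≠ 0 := by
      rintro hx0
      exact hv (funext fun | .inl i => congrFun ha i | .inr j => congrFun hx0 j)
    exact hH.abs_le_of_mem_spectrum (Matrix.mem_spectrum_iff_exists_mulVec_eq_smul.2
      ⟨x, hx0, by rwa [adjMat_eq_adjMatrix]⟩)
  · left
    refine mul_right_cancel₀ hx ?_
    linear_combination (-μ) * hsum_inr - Fintype.card β * hsum_inl

theorem isGreatest_spectrum_gJoin_bot (hH : H.IsRegularOfDegree k) [Nonempty α] [Nonempty β] :
    IsGreatest (spectrum ℝ (adjMat (gJoin (⊥ : SimpleGraph α) H)))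
      (k / 2 + √(k ^ 2 / 4 + Fintype.card α * Fintype.card β)) := by
  set r := √((k : ℝ) ^ 2 / 4 + Fintype.card α * Fintype.card β)
  have hr : r ^ 2 = k ^ 2 / 4 + Fintype.card α * Fintype.card β := Real.sq_sqrt (by positivity)
  refine ⟨mem_spectrum_gJoin_bot_of_eq hH (by linear_combination hr), fun μ hμ => ?_⟩
  rcases eq_or_abs_le_of_mem_spectrum_gJoin_bot hH hμ with hμ | hμ
  · have : |μ - k / 2| ≤ r := Real.abs_le_sqrt (by linear_combination hμ)
    linarith [le_abs_self (μ - k / 2)]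
  · have : |(k : ℝ) / 2| ≤ r := Real.abs_le_sqrt (by nlinarith)
    linarith [le_abs_self ((k : ℝ) / 2), le_abs_self μ]

theorem isLeast_spectrum_gJoin_bot (hH : H.IsRegularOfDegree k) [Nonempty α] [Nonempty β]
    (hk : 2 * k ^ 2 ≤ Fintype.card α * Fintype.card β) :
    IsLeast (spectrum ℝ (adjMat (gJoin (⊥ : SimpleGraph α) H)))
      (k / 2 - √(k ^ 2 / 4 + Fintype.card α * Fintype.card β)) := by
  set r := √((k : ℝ) ^ 2 / 4 + Fintype.card α * Fintype.card β)
  have hr : r ^ 2 = k ^ 2 / 4 + Fintype.card α * Fintype.card β := Real.sq_sqrt (by positivity)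
  refine ⟨mem_spectrum_gJoin_bot_of_eq hH (by linear_combination hr), fun μ hμ => ?_⟩
  rcases eq_or_abs_le_of_mem_spectrum_gJoin_bot hH hμ with hμ | hμ
  · have : |μ - k / 2| ≤ r := Real.abs_le_sqrt (by linear_combination hμ)
    linarith [neg_abs_le (μ - k / 2)]
  · have hk' : 2 * (k : ℝ) ^ 2 ≤ Fintype.card α * Fintype.card β := by exact_mod_cast hk
    have : |3 * (k : ℝ) / 2| ≤ r := Real.abs_le_sqrt (by linarith)
    linarith [le_abs_self (3 * (k : ℝ) / 2), neg_abs_le μ]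

end JoinBot

theorem cycleG_eq_cycleGraph (m : ℕ) : cycleG (m + 2) = cycleGraph (m + 2) := by
  have hsucc (x y : Fin (m + 2)) : ((x : ℕ) + 1) % (m + 2) = y ↔ y = x + 1 := by
    simp [Fin.ext_iff, Fin.val_add, eq_comm]
  ext u v
  change u ≠ v ∧ _ ↔ _
  rw [hsucc, hsucc, cycleGraph_adj, sub_eq_iff_eq_add', sub_eq_iff_eq_add', or_comm,
    and_iff_right_iff_imp]
  rintro (rfl | rfl) <;> simp

theorem cycleG_isRegularOfDegree_two {m : ℕ} (hm : 3 ≤ m) [DecidableRel (cycleG m).Adj] :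
    (cycleG m).IsRegularOfDegree 2 := by
  obtain ⟨m, rfl⟩ := Nat.exists_eq_add_of_le' hm
  intro v
  convert cycleGraph_degree_three_le (v := v)
  exact cycleG_eq_cycleGraph (m + 1)

theorem stmt_14 (n : ℕ) (hn : 7 ≤ n) :
    maxEig (gJoin (⊥ : SimpleGraph (Fin 2)) (cycleG (n - 2))) =
        1 + Real.sqrt (8 * (n : ℝ) - 12) / 2 ∧
    minEig (gJoin (⊥ : SimpleGraph (Fin 2)) (cycleG (n - 2))) =
        1 - Real.sqrt (8 * (n : ℝ) - 12) / 2 ∧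
    gspread (gJoin (⊥ : SimpleGraph (Fin 2)) (cycleG (n - 2))) =
        Real.sqrt (8 * (n : ℝ) - 12) := by
  classical
  have : Nonempty (Fin (n - 2)) := ⟨⟨0, by omega⟩⟩
  have hreg := cycleG_isRegularOfDegree_two (m := n - 2) (by omega)
  have hr : √(((2 : ℕ) : ℝ) ^ 2 / 4 + Fintype.card (Fin 2) * Fintype.card (Fin (n - 2))) =
      √(8 * (n : ℝ) - 12) / 2 := by
    rw [eq_div_iff two_ne_zero, ← Real.sqrt_sq zero_le_two, ← Real.sqrt_mul (by positivity),
      Fintype.card_fin, Fintype.card_fin, Nat.cast_sub (by omega)]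
    congr 1
    push_cast
    ring
  have hmax : maxEig (gJoin (⊥ : SimpleGraph (Fin 2)) (cycleG (n - 2))) =
      1 + √(8 * (n : ℝ) - 12) / 2 := by
    rw [maxEig, (isGreatest_spectrum_gJoin_bot hreg).csSup_eq, hr]
    norm_num
  have hmin : minEig (gJoin (⊥ : SimpleGraph (Fin 2)) (cycleG (n - 2))) =
      1 - √(8 * (n : ℝ) - 12) / 2 := by
    rw [minEig, (isLeast_spectrum_gJoin_bot hreg (by rw [Fintype.card_fin, Fintype.card_fin]; omega)).csInf_eq, hr]
    norm_num
  exact ⟨hmax, hmin, by rw [gspread, hmax, hmin]; ring⟩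
end
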